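/- arXiv:math/0311251 — 3 statements merged into one kernel-verified Lean document; each statement's English description precedes it below -/
import Mathlib

section
/- Let p be a prime. For all λ, μ ∈ ℤ^N one has wt(λ) = wt(μ) in P if and only if l(λ) = l(μ) and A_r(λ) − B_r(λ) = A_r(μ) − B_r(μ) for all r ∈ ℤ/pℤ. -/
namespace Kujawa

open Finset

variable {n : ℕ}

/-- The sign `(−1)^{p̄ i}` attached to the parity sequence `pb`. -/
def sg (pb : Fin (n + 1) → ZMod 2) (i : Fin (n + 1)) : ℤ :=
  if pb i = 0 then 1 else -1

/-- `ϑ_j = ∑_{i > j} (−1)^{p̄_i + p̄_j}`. -/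
def theta (pb : Fin (n + 1) → ZMod 2) (j : Fin (n + 1)) : ℤ :=
  ∑ i ∈ Finset.Ioi j, sg pb i * sg pb j

/-- The standard basis vector `ε_i` of `X(T) = ℤ^N`. -/
def eps (i : Fin (n + 1)) : Fin (n + 1) → ℤ := fun j => if j = i then 1 else 0

/-- The `j`-th residue `r_j(λ) = (λ + ϑ, ε_j)`. -/
def res (pb : Fin (n + 1) → ZMod 2) (l : Fin (n + 1) → ℤ) (j : Fin (n + 1)) : ℤ :=
  sg pb j * (l j + theta pb j)

/-- `ρ = ϑ + ∑_{i : p̄_i = 0} ε_i`, coordinatewise. -/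
def rho (pb : Fin (n + 1) → ZMod 2) (k : Fin (n + 1)) : ℤ :=
  theta pb k + (if pb k = 0 then 1 else 0)

/-- `l(λ) = ∑ λ_i`. -/
def ell (l : Fin (n + 1) → ℤ) : ℤ := ∑ i, l i

/-- The central character value `Z_r(λ)`. -/
def Zint (pb : Fin (n + 1) → ZMod 2) (r : ℕ) (l : Fin (n + 1) → ℤ) : ℤ :=
  ∑ s ∈ Finset.Icc 1 r, (-1 : ℤ) ^ (s - 1) *
    ∑ K ∈ Finset.powersetCard s (Finset.univ : Finset (Fin (n + 1))),
      ∑ a ∈ Fintype.piFinset (fun _ : Fin (n + 1) => Finset.range (r + 2)),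
        if (∑ k ∈ K, a k) = r - s + 1 ∧ (∀ k, k ∉ K → a k = 0) then
          (∏ k ∈ K, sg pb k) * ∏ k ∈ K, res pb l k ^ a k
        else 0

/-- `A_r(λ) = #{i : r_i(λ+ε_i) ≡ r (mod p)}`. -/
def Acount (pb : Fin (n + 1) → ZMod 2) (p : ℕ) (r : ZMod p) (l : Fin (n + 1) → ℤ) : ℕ :=
  (Finset.univ.filter fun i : Fin (n + 1) => ((res pb (l + eps i) i : ℤ) : ZMod p) = r).card

/-- `B_r(λ) = #{i : r_i(λ) ≡ r (mod p)}`. -/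
def Bcount (pb : Fin (n + 1) → ZMod 2) (p : ℕ) (r : ZMod p) (l : Fin (n + 1) → ℤ) : ℕ :=
  (Finset.univ.filter fun i : Fin (n + 1) => ((res pb l i : ℤ) : ZMod p) = r).card

/-- For `p = 0`: `γ_a` is the basis element `single a 1` of the free module `ℤ →₀ ℤ`. -/
noncomputable def gamma0 (a : ℤ) : ℤ →₀ ℤ := Finsupp.single a 1

/-- `wt` for `p = 0`, with values in the free `ℤ`-module on basis `{γ_a : a ∈ ℤ}`. -/
noncomputable def wt0 (pb : Fin (n + 1) → ZMod 2) (l : Fin (n + 1) → ℤ) : ℤ →₀ ℤ :=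
  ∑ i : Fin (n + 1), sg pb i • gamma0 (sg pb i * (l i + rho pb i))

/-- `Λ_r ∈ P = ℤδ ⊕ ⊕_{r ∈ ℤ/pℤ} ℤΛ_r`. -/
def LamP (p : ℕ) (r : ZMod p) : ℤ × (ZMod p → ℤ) := (0, fun s => if s = r then 1 else 0)

/-- `δ ∈ P`. -/
def delP (p : ℕ) : ℤ × (ZMod p → ℤ) := (1, 0)

/-- `γ_a = Λ_{s mod p} − Λ_{(s−1) mod p} − d·δ`, where `a = p·d + s` with `1 ≤ s ≤ p`. -/
def gammaP (p : ℕ) (a : ℤ) : ℤ × (ZMod p → ℤ) :=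
  LamP p (((a - 1) % (p : ℤ) + 1 : ℤ) : ZMod p) - LamP p (((a - 1) % (p : ℤ) : ℤ) : ZMod p) -
    ((a - 1) / (p : ℤ)) • delP p

/-- `wt` for prime `p`. -/
def wtP (p : ℕ) (pb : Fin (n + 1) → ZMod 2) (l : Fin (n + 1) → ℤ) : ℤ × (ZMod p → ℤ) :=
  ∑ i : Fin (n + 1), sg pb i • gammaP p (sg pb i * (l i + rho pb i))

/-- Entry `i` of the `r`-signature of `λ`: `1` codes `+`, `-1` codes `−`, `0` codes `0`. -/
def sig (pb : Fin (n + 1) → ZMod 2) (p : ℕ) (r : ZMod p) (l : Fin (n + 1) → ℤ)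
    (i : Fin (n + 1)) : ℤ :=
  if ((res pb (l + eps i) i : ℤ) : ZMod p) = r then 1
  else if ((res pb l i : ℤ) : ZMod p) = r then -1
  else 0

/-- Number of `−`'s of the `r`-signature of `λ` in positions `[i..j]`. -/
noncomputable def nM (pb : Fin (n + 1) → ZMod 2) (p : ℕ) (r : ZMod p) (l : Fin (n + 1) → ℤ)
    (i j : Fin (n + 1)) : ℕ :=
  Set.ncard {k : Fin (n + 1) | k ∈ Finset.Icc i j ∧ sig pb p r l k = -1}

/-- Number of `+`'s of the `r`-signature of `λ` in positions `[i..j]`. -/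
noncomputable def nP (pb : Fin (n + 1) → ZMod 2) (p : ℕ) (r : ZMod p) (l : Fin (n + 1) → ℤ)
    (i j : Fin (n + 1)) : ℕ :=
  Set.ncard {k : Fin (n + 1) | k ∈ Finset.Icc i j ∧ sig pb p r l k = 1}

/-- `i` is the position of a `−` in the reduced `r`-signature of `λ` (i.e. `i` is
`r`-normal for `λ`): the `−` at `i` is never cancelled, which happens exactly when every
interval `[i..j]` contains strictly more `−`'s than `+`'s. -/
def RMinus (pb : Fin (n + 1) → ZMod 2) (p : ℕ) (r : ZMod p) (l : Fin (n + 1) → ℤ)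
    (i : Fin (n + 1)) : Prop :=
  sig pb p r l i = -1 ∧ ∀ j : Fin (n + 1), i ≤ j → nP pb p r l i j < nM pb p r l i j

/-- `i` is the position of a `+` in the reduced `r`-signature of `λ` (i.e. `i` is
`r`-conormal for `λ`). -/
def RPlus (pb : Fin (n + 1) → ZMod 2) (p : ℕ) (r : ZMod p) (l : Fin (n + 1) → ℤ)
    (i : Fin (n + 1)) : Prop :=
  sig pb p r l i = 1 ∧ ∀ j : Fin (n + 1), j ≤ i → nM pb p r l j i < nP pb p r l j i

/-- `i` is the position of the leftmost `−` in the reduced `r`-signature (`r`-good). -/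
def RGood (pb : Fin (n + 1) → ZMod 2) (p : ℕ) (r : ZMod p) (l : Fin (n + 1) → ℤ)
    (i : Fin (n + 1)) : Prop :=
  RMinus pb p r l i ∧ ∀ j : Fin (n + 1), j < i → ¬ RMinus pb p r l j

/-- `i` is the position of the rightmost `+` in the reduced `r`-signature (`r`-cogood). -/
def RCogood (pb : Fin (n + 1) → ZMod 2) (p : ℕ) (r : ZMod p) (l : Fin (n + 1) → ℤ)
    (i : Fin (n + 1)) : Prop :=
  RPlus pb p r l i ∧ ∀ j : Fin (n + 1), i < j → ¬ RPlus pb p r l j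

open Classical in
/-- The crystal operator `ẽ*_r`, with `none` playing the role of `0`. -/
noncomputable def eStar (pb : Fin (n + 1) → ZMod 2) (p : ℕ) (r : ZMod p)
    (l : Fin (n + 1) → ℤ) : Option (Fin (n + 1) → ℤ) :=
  if h : (Finset.univ.filter (RMinus pb p r l)).Nonempty then
    some (l - eps ((Finset.univ.filter (RMinus pb p r l)).min' h))
  else none

open Classical in
/-- The crystal operator `f̃*_r`, with `none` playing the role of `0`. -/
noncomputable def fStar (pb : Fin (n + 1) → ZMod 2) (p : ℕ) (r : ZMod p)
    (l : Fin (n + 1) → ℤ) : Option (Fin (n + 1) → ℤ) :=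
  if h : (Finset.univ.filter (RPlus pb p r l)).Nonempty then
    some (l + eps ((Finset.univ.filter (RPlus pb p r l)).max' h))
  else none

/-- `A ↓ B`: there is an injection `θ : A → B` with `θ a ≤ a` for all `a ∈ A`. -/
def Down (A B : Finset (Fin (n + 1))) : Prop :=
  ∃ θ : Fin (n + 1) → Fin (n + 1), Set.InjOn θ ↑A ∧ ∀ a ∈ A, θ a ∈ B ∧ θ a ≤ a

/-- `C_{i,j}(λ) = {h ∈ (i..j) : c_{i,h}(λ) ≡ 0 (mod p)}`. -/
def Cset (pb : Fin (n + 1) → ZMod 2) (p : ℕ) (l : Fin (n + 1) → ℤ) (i j : Fin (n + 1)) :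
    Finset (Fin (n + 1)) :=
  (Finset.Ioo i j).filter fun h => ((res pb l i - res pb l h : ℤ) : ZMod p) = 0

/-- `B_{i,j}(λ) = {h ∈ [i..j) : b_{i,h}(λ) ≡ 0 (mod p)}`. -/
def Bset (pb : Fin (n + 1) → ZMod 2) (p : ℕ) (l : Fin (n + 1) → ℤ) (i j : Fin (n + 1)) :
    Finset (Fin (n + 1)) :=
  (Finset.Ico i j).filter fun h =>
    ((res pb l i - res pb (l + eps (h + 1)) (h + 1) : ℤ) : ZMod p) = 0

/-- The opposite parity sequence `p̄′_k = p̄_{w₀ k} + 1̄`, where `w₀ k = N + 1 − k`. -/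
def pbRev (pb : Fin (n + 1) → ZMod 2) : Fin (n + 1) → ZMod 2 := fun k => pb k.rev + 1

/-- `s̃ : ℤ^N → ℤ^N`, `(s̃ λ)_{w₀ i} = −λ_i`. -/
def stilde (l : Fin (n + 1) → ℤ) : Fin (n + 1) → ℤ := fun k => -l k.rev

/-- `(i, j)` is an `r`-canceling pair for `λ` (for `i < j`). -/
def CPair (pb : Fin (n + 1) → ZMod 2) (p : ℕ) (r : ZMod p) (l : Fin (n + 1) → ℤ)
    (i j : Fin (n + 1)) : Prop :=
  sig pb p r l i = -1 ∧ sig pb p r l j = 1 ∧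
    ∀ k : Fin (n + 1), i < k → k < j → sig pb p r l k = 0

/-- `(i i+1)·λ`: interchange coordinates `i` and `i+1`. -/
def swapL (i : Fin (n + 1)) (l : Fin (n + 1) → ℤ) : Fin (n + 1) → ℤ :=
  fun k => if k = i then l (i + 1) else if k = i + 1 then l i else l k

/-- The parity sequence obtained from `pb` by interchanging entries `i` and `i+1`. -/
def pbSwap (pb : Fin (n + 1) → ZMod 2) (i : Fin (n + 1)) : Fin (n + 1) → ZMod 2 :=
  fun k => if k = i then pb (i + 1) else if k = i + 1 then pb i else pb k

/-- The odd reflection `s_i` on `X(T)`. -/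
def sI (pb : Fin (n + 1) → ZMod 2) (p : ℕ) (i : Fin (n + 1)) (l : Fin (n + 1) → ℤ) :
    Fin (n + 1) → ℤ :=
  if ((sg pb i * l i - sg pb (i + 1) * l (i + 1) : ℤ) : ZMod p) = 0 then swapL i l
  else swapL i l + eps i - eps (i + 1)

/-!
The `Λ`-part of `wt λ` at `r` is `A_r(λ) − B_r(λ)`: the sign `(−1)^{p̄_i}` turns the pair
`(a_i, a_i − 1)`, `a_i = (λ + ρ, ε_i)`, into `(r_i(λ + ε_i), r_i(λ))`. For the `δ`-part, the
additive functional `δ ↦ −2p`, `Λ_r ↦ r (r − p)` (`0 ≤ r < p`) sends every `γ_a` to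
`2a − (p + 1)`, because the differences `r (r − p) − (r − 1)(r − 1 − p) = 2r − (p + 1)` also
hold across the wrap-around `r = p`. Hence it sends `wt λ` to
`2 (l(λ) + ∑ ρ_i) − (p + 1) ∑ (−1)^{p̄_i}`, so once the `Λ`-parts agree, the `δ`-parts agree
exactly when `l(λ) = l(μ)`.
-/

section WeightPairing

variable (p : ℕ) [NeZero p]

def lamCoeff (r : ZMod p) : ℤ := r.val * (r.val - p)

lemma lamCoeff_intCast {m : ℤ} (h₀ : 0 ≤ m) (hp : m ≤ p) : lamCoeff p m = m * (m - p) := by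
  rw [lamCoeff, ZMod.val_intCast]
  rcases hp.lt_or_eq with hlt | rfl
  · rw [Int.emod_eq_of_lt h₀ hlt]
  · simp

def wtPairing : ℤ × (ZMod p → ℤ) →+ ℤ where
  toFun x := -(2 * p) * x.1 + ∑ r, lamCoeff p r * x.2 r
  map_zero' := by simp
  map_add' x y := by
    simp only [Prod.fst_add, Prod.snd_add, Pi.add_apply, mul_add, Finset.sum_add_distrib]
    ring

lemma wtPairing_apply (x : ℤ × (ZMod p → ℤ)) :
    wtPairing p x = -(2 * p) * x.1 + ∑ r, lamCoeff p r * x.2 r := rfl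

lemma wtPairing_gammaP (a : ℤ) : wtPairing p (gammaP p a) = 2 * a - (p + 1) := by
  have hp : (0 : ℤ) < p := by exact_mod_cast Nat.pos_of_neZero p
  set t := (a - 1) % p with ht
  have h₀ : 0 ≤ t := Int.emod_nonneg (a - 1) hp.ne'
  have hlt : t < p := Int.emod_lt_of_pos (a - 1) hp
  have hfst : (gammaP p a).1 = -((a - 1) / p) := by simp [gammaP, LamP, delP]
  have hsnd : ∀ r, (gammaP p a).2 r =
      (if r = ((t + 1 : ℤ) : ZMod p) then 1 else 0) -
        (if r = ((t : ℤ) : ZMod p) then 1 else 0) := by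
    intro r; simp [gammaP, LamP, delP, ht]
  simp only [wtPairing_apply, hfst, hsnd, mul_sub, mul_ite, mul_one, mul_zero,
    Finset.sum_sub_distrib, Finset.sum_ite_eq', Finset.mem_univ, if_true,
    lamCoeff_intCast p h₀ hlt.le, lamCoeff_intCast p (by omega : 0 ≤ t + 1) (by omega)]
  linear_combination 2 * Int.mul_ediv_add_emod (a - 1) p

end WeightPairing

lemma sg_mul_self (pb : Fin (n + 1) → ZMod 2) (i : Fin (n + 1)) : sg pb i * sg pb i = 1 := by
  unfold sg; split <;> norm_num

lemma sg_mul_sub_eq_res_sub (pb : Fin (n + 1) → ZMod 2) (l : Fin (n + 1) → ℤ)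
    (i : Fin (n + 1)) (f : ℤ → ℤ) :
    sg pb i * (f (sg pb i * (l i + rho pb i)) - f (sg pb i * (l i + rho pb i) - 1)) =
      f (res pb (l + eps i) i) - f (res pb l i) := by
  by_cases h : pb i = 0
  · simp only [sg, rho, res, eps, h, if_true, Pi.add_apply, one_mul]
    ring_nf
  · simp only [sg, rho, res, eps, h, if_false, Pi.add_apply, if_true]
    ring_nf

lemma gammaP_snd_apply (p : ℕ) (a : ℤ) (r : ZMod p) :
    (gammaP p a).2 r =
      (if (a : ZMod p) = r then 1 else 0) - (if ((a - 1 : ℤ) : ZMod p) = r then 1 else 0) := by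
  have h₁ : (((a - 1) % p + 1 : ℤ) : ZMod p) = a := by push_cast [ZMod.intCast_mod]; ring
  simp [gammaP, LamP, delP, h₁, ZMod.intCast_mod, eq_comm]

lemma wtP_snd_apply (p : ℕ) (pb : Fin (n + 1) → ZMod 2) (l : Fin (n + 1) → ℤ) (r : ZMod p) :
    (wtP p pb l).2 r = (Acount pb p r l : ℤ) - Bcount pb p r l := by
  simp only [wtP, Prod.snd_sum, Finset.sum_apply, Prod.smul_snd, Pi.smul_apply, smul_eq_mul,
    gammaP_snd_apply, sg_mul_sub_eq_res_sub pb l _ fun x => if (x : ZMod p) = r then 1 else 0,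
    Finset.sum_sub_distrib, Finset.sum_boole, Acount, Bcount]

lemma wtPairing_wtP (p : ℕ) [NeZero p] (pb : Fin (n + 1) → ZMod 2) (l : Fin (n + 1) → ℤ) :
    wtPairing p (wtP p pb l) = 2 * (ell l + ∑ i, rho pb i) - (p + 1) * ∑ i, sg pb i := by
  simp only [wtP, map_sum, map_zsmul, wtPairing_gammaP, smul_eq_mul, ell,
    ← Finset.sum_add_distrib, Finset.mul_sum, ← Finset.sum_sub_distrib]
  refine Finset.sum_congr rfl fun i _ => ?_
  linear_combination (2 * (l i + rho pb i)) * sg_mul_self pb i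

/-- for a prime `p`, `wt(λ) = wt(μ)` in `P` iff `l(λ) = l(μ)` and
`A_r(λ) − B_r(λ) = A_r(μ) − B_r(μ)` for all `r ∈ ℤ/pℤ`. -/
theorem statement3 (p : ℕ) (hp : p.Prime) (pb : Fin (n + 1) → ZMod 2)
    (lam mu : Fin (n + 1) → ℤ) :
    wtP p pb lam = wtP p pb mu ↔
      (ell lam = ell mu ∧ ∀ r : ZMod p,
        (Acount pb p r lam : ℤ) - (Bcount pb p r lam : ℤ) =
          (Acount pb p r mu : ℤ) - (Bcount pb p r mu : ℤ)) := by
  have : NeZero p := ⟨hp.ne_zero⟩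
  have hsnd_iff : (wtP p pb lam).2 = (wtP p pb mu).2 ↔ ∀ r : ZMod p,
      (Acount pb p r lam : ℤ) - (Bcount pb p r lam : ℤ) =
        (Acount pb p r mu : ℤ) - (Bcount pb p r mu : ℤ) := by
    simp only [funext_iff, wtP_snd_apply]
  constructor
  · intro h
    have hpair := congrArg (wtPairing p) h
    rw [wtPairing_wtP, wtPairing_wtP] at hpair
    exact ⟨by linarith, hsnd_iff.1 (congrArg Prod.snd h)⟩
  · rintro ⟨hell, hAB⟩
    have hsnd := hsnd_iff.2 hAB
    have hpair : wtPairing p (wtP p pb lam) = wtPairing p (wtP p pb mu) := by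
      rw [wtPairing_wtP, wtPairing_wtP, hell]
    rw [wtPairing_apply, wtPairing_apply, hsnd] at hpair
    have h2p : -(2 * (p : ℤ)) ≠ 0 := by have := hp.pos; omega
    exact Prod.ext (mul_left_cancel₀ h2p (add_right_cancel hpair)) hsnd

end Kujawa
end

section
/- For every λ ∈ ℤ^N and every 1 ≤ i ≤ N: i is normal for λ if and only if B_{i,N}(λ) ↓ C_{i,N}(λ). -/
/-!
Only `r = r_i(λ) mod p` can make `i` normal, and for that `r` the `+`'s of the signature after
`i` sit exactly at the positions `h + 1` with `h ∈ B_{i,N}(λ)`, while its `−`'s strictly between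
`i` and `N` form `C_{i,N}(λ)`. Normality of `i` is the ballot condition that every window `[i, j]`
holds more `−`'s than `+`'s. An injection `θ : B ↓ C` sends the `+` at `h + 1` to a distinct `−`
in `(i, h]`, which gives the ballot condition; conversely the ballot condition is Hall's condition
for such an injection.
-/

namespace Kujawa

open Finset

variable {n : ℕ}

theorem exists_injOn_le_of_card_filter_le {α : Type*} [LinearOrder α] {A B : Finset α}
    (hAB : ∀ a ∈ A, #(A.filter (· ≤ a)) ≤ #(B.filter (· ≤ a))) :
    ∃ θ : α → α, Set.InjOn θ A ∧ ∀ a ∈ A, θ a ∈ B ∧ θ a ≤ a := by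
  have hall : ∀ s : Finset A, #s ≤ #(s.biUnion fun a => B.filter (· ≤ (a : α))) := by
    intro s
    obtain rfl | hs := s.eq_empty_or_nonempty
    · simp
    -- the candidate sets `B ∩ (-∞, a]` are nested: a union of them is the one at the largest `a`
    obtain ⟨m, hm, hmax⟩ := s.exists_max_image (fun a => (a : α)) hs
    calc #s ≤ #(A.filter (· ≤ (m : α))) :=
          card_le_card_of_injOn Subtype.val
            (fun a ha => mem_filter.mpr ⟨a.2, hmax a ha⟩) Subtype.val_injective.injOn
      _ ≤ #(B.filter (· ≤ (m : α))) := hAB m m.2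
      _ ≤ _ := card_le_card (subset_biUnion_of_mem (fun a : A => B.filter (· ≤ (a : α))) hm)
  obtain ⟨f, hf_inj, hf⟩ := (all_card_le_biUnion_card_iff_exists_injective _).mp hall
  refine ⟨fun x => if hx : x ∈ A then f ⟨x, hx⟩ else x, ?_, fun a ha => ?_⟩
  · intro a ha b hb hab
    simp only [dif_pos (mem_coe.mp ha), dif_pos (mem_coe.mp hb)] at hab
    exact congrArg Subtype.val (hf_inj hab)
  · simpa only [dif_pos ha, mem_filter] using hf ⟨a, ha⟩

section Word

variable (w : Fin (n + 1) → ℤ) {i : Fin (n + 1)}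

theorem down_of_ballot
    (hball : ∀ j, i ≤ j → #((Icc i j).filter (w · = 1)) < #((Icc i j).filter (w · = -1))) :
    Down ((Ico i (Fin.last n)).filter fun h => w (h + 1) = 1)
      ((Ioo i (Fin.last n)).filter (w · = -1)) := by
  refine exists_injOn_le_of_card_filter_le fun a ha => ?_
  simp only [mem_filter, mem_Ico] at ha
  obtain ⟨⟨hia, hal⟩, hwa⟩ := ha
  have ha1 : ((a + 1 : Fin (n + 1)) : ℕ) = a + 1 := Fin.val_add_one_of_lt hal
  have hcount := hball (a + 1) (by simp only [Fin.le_def, ha1] at hia ⊢; omega)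
  have hplus : #(((Ico i (Fin.last n)).filter fun h => w (h + 1) = 1).filter (· ≤ a)) ≤
      #((Icc i (a + 1)).filter (w · = 1)) := by
    refine card_le_card_of_injOn (· + 1) (fun b hb => ?_) (add_left_injective 1).injOn
    simp only [mem_coe, mem_filter, mem_Ico] at hb
    obtain ⟨⟨⟨hib, hbl⟩, hwb⟩, hba⟩ := hb
    have hb1 : ((b + 1 : Fin (n + 1)) : ℕ) = b + 1 := Fin.val_add_one_of_lt hbl
    simp only [mem_coe, mem_filter, mem_Icc, Fin.le_def, hb1, ha1] at hia hib hba ⊢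
    exact ⟨⟨by omega, by omega⟩, hwb⟩
  have hminus : (Icc i (a + 1)).filter (w · = -1) ⊆
      insert i (((Ioo i (Fin.last n)).filter (w · = -1)).filter (· ≤ a)) := by
    intro k hk
    simp only [mem_filter, mem_Icc] at hk
    obtain ⟨⟨hik, hka⟩, hwk⟩ := hk
    have hk_ne : k ≠ a + 1 := by rintro rfl; rw [hwa] at hwk; norm_num at hwk
    rcases eq_or_lt_of_le hik with rfl | hik
    · exact mem_insert_self _ _
    refine mem_insert_of_mem (mem_filter.mpr ⟨mem_filter.mpr ⟨mem_Ioo.mpr ⟨hik, ?_⟩, hwk⟩, ?_⟩)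
    all_goals simp only [Fin.lt_def, Fin.le_def, Fin.val_last, ha1, ne_eq, Fin.ext_iff] at *
    all_goals omega
  exact Nat.lt_succ_iff.mp
    (hplus.trans_lt (hcount.trans_le ((card_le_card hminus).trans (card_insert_le _ _))))

theorem ballot_of_down (hi : w i = -1)
    (hdown : Down ((Ico i (Fin.last n)).filter fun h => w (h + 1) = 1)
      ((Ioo i (Fin.last n)).filter (w · = -1))) :
    ∀ j, i ≤ j → #((Icc i j).filter (w · = 1)) < #((Icc i j).filter (w · = -1)) := by
  obtain ⟨θ, hθ_inj, hθ⟩ := hdown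
  intro j hij
  have hpred : ∀ k ∈ (Icc i j).filter (w · = 1),
      k - 1 ∈ (Ico i (Fin.last n)).filter (fun h => w (h + 1) = 1) ∧ k - 1 < k ∧ k ≤ j := by
    intro k hk
    simp only [mem_filter, mem_Icc] at hk
    obtain ⟨⟨hik, hkj⟩, hwk⟩ := hk
    have hik : i < k := lt_of_le_of_ne hik (by rintro rfl; rw [hi] at hwk; norm_num at hwk)
    have hk1 : ((k - 1 : Fin (n + 1)) : ℕ) = k - 1 := by
      rw [Fin.coe_sub_one, if_neg (Fin.pos_iff_ne_zero.mp (lt_of_le_of_lt (Fin.zero_le i) hik))]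
    rw [Fin.lt_def] at hik
    rw [Fin.le_def] at hkj
    simp only [mem_filter, mem_Ico, sub_add_cancel, Fin.lt_def, Fin.le_def, Fin.val_last, hk1, hwk,
      and_true]
    omega
  calc #((Icc i j).filter (w · = 1))
      ≤ #(((Icc i j).filter (w · = -1)).erase i) := by
        refine card_le_card_of_injOn (fun k => θ (k - 1)) (fun k hk => ?_) (fun k hk k' hk' h => ?_)
        · obtain ⟨hA, hlt, hkj⟩ := hpred k hk
          obtain ⟨hC, hle⟩ := hθ _ hA
          simp only [mem_filter, mem_Ioo] at hC
          simp only [mem_coe, mem_erase, mem_filter, mem_Icc]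
          exact ⟨hC.1.1.ne', ⟨hC.1.1.le, hle.trans (hlt.le.trans hkj)⟩, hC.2⟩
        · exact sub_left_injective (hθ_inj (hpred k hk).1 (hpred k' hk').1 h)
    _ < #((Icc i j).filter (w · = -1)) :=
        card_erase_lt_of_mem (mem_filter.mpr ⟨mem_Icc.mpr ⟨le_rfl, hij⟩, hi⟩)

theorem ballot_iff_down (hi : w i = -1) :
    (∀ j, i ≤ j → #((Icc i j).filter (w · = 1)) < #((Icc i j).filter (w · = -1))) ↔
      Down ((Ico i (Fin.last n)).filter fun h => w (h + 1) = 1)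
        ((Ioo i (Fin.last n)).filter (w · = -1)) :=
  ⟨down_of_ballot w, ballot_of_down w hi⟩

end Word

section Signature

variable (pb : Fin (n + 1) → ZMod 2) (p : ℕ) (l : Fin (n + 1) → ℤ)

theorem res_add_eps (k : Fin (n + 1)) : res pb (l + eps k) k = res pb l k + sg pb k := by
  simp only [res, eps, Pi.add_apply, if_true]
  ring

variable {p}

theorem sg_cast_ne_zero (hp : p ≠ 1) (k : Fin (n + 1)) : ((sg pb k : ℤ) : ZMod p) ≠ 0 := by
  have := ZMod.nontrivial_iff.mpr hp
  unfold sg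
  split_ifs <;> simp

theorem sig_eq_one_iff (r : ZMod p) (k : Fin (n + 1)) :
    sig pb p r l k = 1 ↔ ((res pb (l + eps k) k : ℤ) : ZMod p) = r := by
  unfold sig
  split_ifs <;> simp_all

theorem sig_eq_neg_one_iff (hp : p ≠ 1) (r : ZMod p) (k : Fin (n + 1)) :
    sig pb p r l k = -1 ↔ ((res pb l k : ℤ) : ZMod p) = r := by
  unfold sig
  split_ifs with hplus
  · refine iff_of_false (by norm_num) fun hres => sg_cast_ne_zero pb hp k ?_
    rwa [res_add_eps, Int.cast_add, hres, add_eq_left] at hplus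
  all_goals simp_all

theorem nP_eq_card (r : ZMod p) (i j : Fin (n + 1)) :
    nP pb p r l i j = #((Icc i j).filter (sig pb p r l · = 1)) := by
  rw [nP, ← Set.ncard_coe_finset, coe_filter]

theorem nM_eq_card (r : ZMod p) (i j : Fin (n + 1)) :
    nM pb p r l i j = #((Icc i j).filter (sig pb p r l · = -1)) := by
  rw [nM, ← Set.ncard_coe_finset, coe_filter]

theorem bset_eq_filter_sig (i j : Fin (n + 1)) :
    Bset pb p l i j = (Ico i j).filter fun h => sig pb p (res pb l i) l (h + 1) = 1 := by
  refine filter_congr fun h _ => ?_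
  rw [sig_eq_one_iff, Int.cast_sub, sub_eq_zero, eq_comm]

theorem cset_eq_filter_sig (hp : p ≠ 1) (i j : Fin (n + 1)) :
    Cset pb p l i j = (Ioo i j).filter (sig pb p (res pb l i) l · = -1) := by
  refine filter_congr fun h _ => ?_
  rw [sig_eq_neg_one_iff pb l hp, Int.cast_sub, sub_eq_zero, eq_comm]

end Signature

/-- `i` is normal for `λ` iff `B_{i,N}(λ) ↓ C_{i,N}(λ)`. -/
theorem statement7 (p : ℕ) (hp : p = 0 ∨ p.Prime) (pb : Fin (n + 1) → ZMod 2)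
    (lam : Fin (n + 1) → ℤ) (i : Fin (n + 1)) :
    (∃ r : ZMod p, RMinus pb p r lam i) ↔
      Down (Bset pb p lam i (Fin.last n)) (Cset pb p lam i (Fin.last n)) := by
  have hp1 : p ≠ 1 := by
    rcases hp with rfl | hp
    exacts [zero_ne_one, hp.one_lt.ne']
  have hi : sig pb p (res pb lam i) lam i = -1 := (sig_eq_neg_one_iff pb lam hp1 _ i).mpr rfl
  rw [bset_eq_filter_sig, cset_eq_filter_sig pb lam hp1, ← ballot_iff_down _ hi]
  simp only [RMinus, nP_eq_card, nM_eq_card]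
  constructor
  · rintro ⟨r, hsig, hball⟩
    obtain rfl := (sig_eq_neg_one_iff pb lam hp1 r i).mp hsig
    exact hball
  · exact fun hball => ⟨_, hi, hball⟩

end Kujawa
end

section
/- For every λ ∈ ℤ^N, every r ∈ ℤ/pℤ, and every 1 ≤ i ≤ N: i is the position of a − in the reduced r-signature σ̃_r(λ) if and only if there exists a ≥ 0 such that (ẽ*_r)^a(λ) ≠ 0 and (ẽ*_r)^{a+1}(λ) = (ẽ*_r)^a(λ) − ε_i, where ẽ*_r is extended by ẽ*_r(0) = 0 and (ẽ*_r)^0(λ) = λ. -/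
namespace Kujawa

open Finset

variable {n : ℕ}

/-!
The operator `ẽ*_r` turns the leftmost uncancelled `−` of the `r`-signature, at `j` say, into a
`+` and changes no other entry. Raising entries of a signature can only destroy uncancelled `−`'s,
and positions to the right of `j` see an unchanged signature; as no uncancelled `−` lies left of
`j`, the uncancelled `−`'s of `λ - ε_j` are exactly those of `λ` other than `j`. So iterating
`ẽ*_r` removes the uncancelled `−`'s one at a time, from left to right.
-/

section Crystal

variable {pb : Fin (n + 1) → ZMod 2} {p : ℕ} {r : ZMod p} {l l' mu : Fin (n + 1) → ℤ}
  {i j k : Fin (n + 1)}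

lemma eps_injective : Function.Injective (eps (n := n)) := by
  intro i j h
  simpa [eps] using congrFun h i

lemma neg_one_le_sig : -1 ≤ sig pb p r l k := by
  unfold sig; split_ifs <;> norm_num

lemma sig_le_one : sig pb p r l k ≤ 1 := by
  unfold sig; split_ifs <;> norm_num

lemma sig_congr (h : l k = l' k) : sig pb p r l k = sig pb p r l' k := by
  simp [sig, res, eps, h]

lemma sig_sub_eps_of_ne (hkj : k ≠ j) : sig pb p r (l - eps j) k = sig pb p r l k :=
  sig_congr (by simp [eps, hkj])

lemma sig_sub_eps_self (hj : sig pb p r l j = -1) : sig pb p r (l - eps j) j = 1 := by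
  unfold sig at hj ⊢
  split_ifs at hj with _ hres
  simp [hres]

lemma sig_le_sig_sub_eps (hj : sig pb p r l j = -1) (k : Fin (n + 1)) :
    sig pb p r l k ≤ sig pb p r (l - eps j) k := by
  obtain rfl | hkj := eq_or_ne k j
  · rw [sig_sub_eps_self hj, hj]; norm_num
  · rw [sig_sub_eps_of_ne hkj]

lemma RMinus.of_sig_le (hk : RMinus pb p r l' k)
    (hle : ∀ m, k ≤ m → sig pb p r l m ≤ sig pb p r l' m) : RMinus pb p r l k := by
  refine ⟨le_antisymm (hk.1 ▸ hle k le_rfl) neg_one_le_sig, fun m hkm => ?_⟩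
  have hP : nP pb p r l k m ≤ nP pb p r l' k m :=
    Set.ncard_le_ncard (fun x ⟨hx, hsx⟩ =>
      ⟨hx, le_antisymm sig_le_one (hsx ▸ hle x (mem_Icc.1 hx).1)⟩) (Set.toFinite _)
  have hM : nM pb p r l' k m ≤ nM pb p r l k m :=
    Set.ncard_le_ncard (fun x ⟨hx, hsx⟩ =>
      ⟨hx, le_antisymm (hsx ▸ hle x (mem_Icc.1 hx).1) neg_one_le_sig⟩) (Set.toFinite _)
  exact hP.trans_lt ((hk.2 m hkm).trans_le hM)

lemma RMinus.of_sub_eps (hk : RMinus pb p r (l - eps j) k) (hj : sig pb p r l j = -1) :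
    RMinus pb p r l k :=
  hk.of_sig_le fun m _ => sig_le_sig_sub_eps hj m

lemma RGood.rMinus_sub_eps_iff (hj : RGood pb p r l j) :
    RMinus pb p r (l - eps j) k ↔ RMinus pb p r l k ∧ k ≠ j := by
  constructor
  · intro hk
    refine ⟨hk.of_sub_eps hj.1.1, ?_⟩
    rintro rfl
    have := hk.1
    rw [sig_sub_eps_self hj.1.1] at this
    norm_num at this
  · rintro ⟨hk, hkj⟩
    have hjk : j < k := lt_of_le_of_ne (not_lt.1 fun hkj' => hj.2 k hkj' hk) hkj.symm
    exact hk.of_sig_le fun m hkm => (sig_sub_eps_of_ne (hjk.trans_le hkm).ne').le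

lemma RGood.setOf_rMinus_sub_eps (hj : RGood pb p r l j) :
    {k | RMinus pb p r (l - eps j) k} = {k | RMinus pb p r l k} \ {j} := by
  ext k
  exact hj.rMinus_sub_eps_iff

lemma exists_rGood_le (hi : RMinus pb p r l i) : ∃ j ≤ i, RGood pb p r l j := by
  obtain ⟨j, hji, hj, hmin⟩ := exists_minimal_le_of_wellFoundedLT _ i hi
  exact ⟨j, hji, hj, fun k hkj hk => (hmin hk hkj.le).not_gt hkj⟩

lemma eStar_eq_some_iff :
    eStar pb p r l = some mu ↔ ∃ j, RGood pb p r l j ∧ mu = l - eps j := by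
  classical
  unfold eStar
  split_ifs with hne
  · set m := (univ.filter (RMinus pb p r l)).min' hne
    have hm : RGood pb p r l m :=
      ⟨(mem_filter.1 (min'_mem _ hne)).2, fun k hkm hk =>
        (min'_le _ k (mem_filter.2 ⟨mem_univ k, hk⟩)).not_gt hkm⟩
    have hunique : ∀ j, RGood pb p r l j → j = m := fun j hj =>
      (lt_trichotomy j m).elim (fun h => (hm.2 j h hj.1).elim)
        fun h => h.resolve_right fun h => hj.2 m h hm.1
    constructor
    · intro h
      exact ⟨m, hm, (Option.some_inj.1 h).symm⟩
    · rintro ⟨j, hj, rfl⟩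
      rw [hunique j hj]
  · simp only [false_iff, not_exists, not_and]
    exact fun j hj _ => hne ⟨j, mem_filter.2 ⟨mem_univ j, hj.1⟩⟩

theorem exists_iterate_eStar_of_rMinus (l : Fin (n + 1) → ℤ) (hi : RMinus pb p r l i) :
    ∃ (a : ℕ) (mu : Fin (n + 1) → ℤ),
      (fun o => Option.bind o (eStar pb p r))^[a] (some l) = some mu ∧
        (fun o => Option.bind o (eStar pb p r))^[a + 1] (some l) = some (mu - eps i) := by
  obtain ⟨j, hji, hj⟩ := exists_rGood_le hi
  have hstep : eStar pb p r l = some (l - eps j) := eStar_eq_some_iff.2 ⟨j, hj, rfl⟩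
  obtain rfl | hlt := hji.eq_or_lt
  · exact ⟨0, l, rfl, hstep⟩
  obtain ⟨a, mu, h, hsucc⟩ :=
    exists_iterate_eStar_of_rMinus (l - eps j) (hj.rMinus_sub_eps_iff.2 ⟨hi, hlt.ne'⟩)
  refine ⟨a + 1, mu, ?_, ?_⟩ <;>
    simpa only [Function.iterate_succ_apply, Option.bind_some, hstep]
termination_by {k | RMinus pb p r l k}.ncard
decreasing_by
  rw [hj.setOf_rMinus_sub_eps]
  exact Set.ncard_sdiff_singleton_lt_of_mem hj.1

theorem rMinus_of_iterate_eStar {a : ℕ}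
    (h : (fun o => Option.bind o (eStar pb p r))^[a] (some l) = some mu)
    (hmu : RMinus pb p r mu i) : RMinus pb p r l i := by
  induction a generalizing l with
  | zero => exact Option.some_inj.1 h ▸ hmu
  | succ a ih =>
    rcases hl : eStar pb p r l with _ | l'
    · simp only [Function.iterate_succ_apply, Option.bind_some, hl] at h
      rw [Function.iterate_fixed (x := none) rfl] at h
      cases h
    · simp only [Function.iterate_succ_apply, Option.bind_some, hl] at h
      obtain ⟨j, hj, rfl⟩ := eStar_eq_some_iff.1 hl
      exact (ih h).of_sub_eps hj.1.1

end Crystal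

theorem statement14_general (p : ℕ) (pb : Fin (n + 1) → ZMod 2)
    (lam : Fin (n + 1) → ℤ) (r : ZMod p) (i : Fin (n + 1)) :
    RMinus pb p r lam i ↔
      ∃ (a : ℕ) (mu : Fin (n + 1) → ℤ),
        (fun o => Option.bind o (eStar pb p r))^[a] (some lam) = some mu ∧
          (fun o => Option.bind o (eStar pb p r))^[a + 1] (some lam) = some (mu - eps i) := by
  refine ⟨exists_iterate_eStar_of_rMinus lam, ?_⟩
  rintro ⟨a, mu, h, hsucc⟩
  rw [Function.iterate_succ_apply', h] at hsucc
  obtain ⟨j, hj, hij⟩ := eStar_eq_some_iff.1 hsucc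
  obtain rfl := eps_injective (sub_right_injective hij)
  exact rMinus_of_iterate_eStar h hj.1

/-- `i` is the position of a `−` in the reduced `r`-signature of `λ` iff
`(ẽ*_r)^{a+1}(λ) = (ẽ*_r)^a(λ) − ε_i` for some `a ≥ 0` with `(ẽ*_r)^a(λ) ≠ 0`. -/
theorem statement14 (p : ℕ) (hp : p = 0 ∨ p.Prime) (pb : Fin (n + 1) → ZMod 2)
    (lam : Fin (n + 1) → ℤ) (r : ZMod p) (i : Fin (n + 1)) :
    RMinus pb p r lam i ↔
      ∃ (a : ℕ) (mu : Fin (n + 1) → ℤ),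
        (fun o => Option.bind o (eStar pb p r))^[a] (some lam) = some mu ∧
          (fun o => Option.bind o (eStar pb p r))^[a + 1] (some lam) = some (mu - eps i) :=
  statement14_general p pb lam r i

end Kujawa
end
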